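/- For every integer d ≥ 2, every real n ≥ 1 and every real k with 0 < k < 1, the expression S_{d,n}(k) = −d²k²√(n−1) − 2d²kn + 2d²k√(n−1)·√n + 2d²√n + 2dkn − 2dk√(n−1)·√n − 2dk + k²√(n−1) satisfies S_{d,n}(k) > S_{d,n}(1) ≥ 0; in particular S_{d,n}(k) > 0. -/
import Mathlib


/-- `S_{d,n}(k) = −d²k²√(n−1) − 2d²kn + 2d²k√(n−1)√n + 2d²√n + 2dkn − 2dk√(n−1)√n − 2dk
+ k²√(n−1)`. -/
noncomputable def Sfun (d : ℕ) (n : ℝ) (k : ℝ) : ℝ :=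
  -(d : ℝ) ^ 2 * k ^ 2 * Real.sqrt (n - 1) - 2 * (d : ℝ) ^ 2 * k * n +
    2 * (d : ℝ) ^ 2 * k * Real.sqrt (n - 1) * Real.sqrt n + 2 * (d : ℝ) ^ 2 * Real.sqrt n +
    2 * (d : ℝ) * k * n - 2 * (d : ℝ) * k * Real.sqrt (n - 1) * Real.sqrt n - 2 * (d : ℝ) * k +
    k ^ 2 * Real.sqrt (n - 1)

/-- For every integer `d ≥ 2`, real `n ≥ 1` and `0 < k < 1`:
`S_{d,n}(k) > S_{d,n}(1) ≥ 0`; in particular `S_{d,n}(k) > 0`. -/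
theorem Sfun_pos (d : ℕ) (hd : 2 ≤ d) (n : ℝ) (hn : 1 ≤ n) (k : ℝ)
    (hk0 : 0 < k) (hk1 : k < 1) :
    Sfun d n k > Sfun d n 1 ∧ Sfun d n 1 ≥ 0 ∧ 0 < Sfun d n k := by
  have hD : (2:ℝ) ≤ (d:ℝ) := by exact_mod_cast hd
  set D := (d:ℝ) with hDdef
  set a := Real.sqrt (n-1) with hadef
  set b := Real.sqrt n with hbdef
  have ha0 : 0 ≤ a := Real.sqrt_nonneg _
  have hb1 : 1 ≤ b := by
    rw [hbdef, show (1:ℝ) = Real.sqrt 1 by simp]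
    exact Real.sqrt_le_sqrt hn
  have ha2 : a^2 = n - 1 := Real.sq_sqrt (by linarith)
  have hb2 : b^2 = n := Real.sq_sqrt (by linarith)
  have hab : a ≤ b := Real.sqrt_le_sqrt (by linarith)
  have hS1 : Sfun d n 1 ≥ 0 := by
    have key : Sfun d n 1 * ((a+b)*(1+b)) =
        a * ((D^2+1)*(a+b)*(1+b) - 2*D*(1+b) - 2*D^2*a) := by
      have hrel : a^2 = b^2 - 1 := by rw [ha2, hb2]
      simp only [Sfun]
      rw [← hadef, ← hbdef, ← hb2]
      linear_combination (-2*D*b - 2*D*b^2 + 2*D^2*b^2) * hrel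
    have h1 : 0 ≤ (D^2+1)*(a+b)*(1+b) - 2*D*(1+b) - 2*D^2*a := by
      have e1 : 2*D ≤ (D^2+1)*b := by nlinarith
      have e2 : 2*D^2 ≤ (D^2+1)*(1+b) := by nlinarith
      nlinarith [mul_nonneg ha0 (sub_nonneg.2 e2), mul_nonneg (sub_nonneg.2 e1) (by linarith : (0:ℝ) ≤ 1+b)]
    have hpos : 0 < (a+b)*(1+b) := by nlinarith
    nlinarith [mul_nonneg ha0 h1]
  have hgt : Sfun d n k > Sfun d n 1 := by
    have key : Sfun d n k - Sfun d n 1 =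
        (1-k) * ((D^2-1)*a*(k+1) + 2*D*(D-1)*b*(b-a) + 2*D) := by
      simp only [Sfun]
      rw [← hadef, ← hbdef, ← hb2]
      ring
    have h1 : 0 < (D^2-1)*a*(k+1) + 2*D*(D-1)*b*(b-a) + 2*D := by
      nlinarith [mul_nonneg (mul_nonneg (by nlinarith : (0:ℝ) ≤ D^2-1) ha0) (by linarith : (0:ℝ) ≤ k+1),
        mul_nonneg (mul_nonneg (by nlinarith : (0:ℝ) ≤ 2*D*(D-1)) (by linarith : (0:ℝ) ≤ b)) (by linarith : (0:ℝ) ≤ b-a)]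
    nlinarith [mul_pos (by linarith : (0:ℝ) < 1-k) h1]
  exact ⟨hgt, hS1, by linarith⟩
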